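/- With A(γ), A* as in CBP(F;d,γ), define P = P(γ) ∈ Mat_{d+1}(F) with (i,j)-entry (−i−γ)_j/(1−γ)_j, where (a)_r = a(a+1)⋯(a+r−1). Then A(γ)P(γ) = P(γ)A* and A*P(γ) = P(γ)A(−γ). -/

import Mathlib

/-- The Pochhammer symbol `(a)_r = a(a+1)⋯(a+r-1)`. -/
def poch {F : Type*} [Field F] (a : F) (r : ℕ) : F :=
  ∏ ℓ ∈ Finset.range r, (a + ℓ)

/-- The matrix `A(γ)` of the circular bidiagonal pair `CBP(F;d,γ)`. -/
def cbMat {F : Type*} [Field F] (d : ℕ) (γ : F) : Matrix (Fin (d + 1)) (Fin (d + 1)) F :=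
  Matrix.of fun i j : Fin (d + 1) =>
    if i.val = j.val then (i.val : F) + γ
    else if i.val = j.val + 1 then -(i.val : F) - γ
    else if i.val = 0 ∧ j.val = d then -γ else 0

/-- The matrix `P(γ)` with entries `(-i-γ)_j / (1-γ)_j`. -/
def Pmat {F : Type*} [Field F] (d : ℕ) (γ : F) : Matrix (Fin (d + 1)) (Fin (d + 1)) F :=
  Matrix.of fun i j : Fin (d + 1) =>
    poch (-(i.val : F) - γ) j.val / poch (1 - γ) j.val

/-!
Column `j` of `P(γ)` is `((-i-γ)_j)_i / (1-γ)_j`. Row `i` of `A(γ)` takes differences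
`(i+γ)(x_i - x_{i-1})`, and `a ((a+1)_j - (a)_j) = j (a)_j` makes the columns eigenvectors with
eigenvalue `j`. Column `j` of `A(-γ)` pairs columns `j` and `j+1` of `P`, and
`(a)_{j+1} = (a)_j (a+j)` gives `A* P = P A(-γ)` away from the last column. The last column
wraps around to column `0` of `P`, and there the identity becomes `(-i-γ-1)_{d+1} = (-γ)_{d+1}`,
which holds because `d + 1 = char F` makes `(c)_{d+1}` invariant under integer shifts of `c`.
-/

lemma natCast_add_one_eq_zero_of_charP (R : Type*) [AddGroupWithOne R] (n : ℕ) [CharP R (n + 1)] :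
    (n : R) + 1 = 0 := by
  exact_mod_cast CharP.cast_eq_zero R (n + 1)

section Pochhammer

variable {F : Type*} [Field F]

lemma poch_zero (a : F) : poch a 0 = 1 :=
  Finset.prod_range_zero _

lemma poch_succ_right (a : F) (j : ℕ) : poch a (j + 1) = poch a j * (a + j) :=
  Finset.prod_range_succ _ _

lemma poch_succ_left (a : F) (j : ℕ) : poch a (j + 1) = a * poch (a + 1) j := by
  rw [poch, Finset.prod_range_succ', mul_comm, Nat.cast_zero, add_zero]
  simp only [poch, Nat.cast_succ, add_assoc, add_comm (1 : F)]

lemma mul_poch_add_one_sub_poch (a : F) (j : ℕ) :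
    a * (poch (a + 1) j - poch a j) = j * poch a j := by
  linear_combination poch_succ_right a j - poch_succ_left a j

lemma poch_ne_zero_of_forall (a : F) (r : ℕ) (h : ∀ ℓ < r, a + ℓ ≠ 0) : poch a r ≠ 0 :=
  Finset.prod_ne_zero_iff.mpr fun ℓ hℓ => h ℓ (Finset.mem_range.mp hℓ)

/-- In characteristic `p` the factors of `(c)_p` run over the coset `c + 𝔽_p`, which a shift by
an integer permutes. -/
lemma poch_add_natCast (p : ℕ) [CharP F p] (c : F) (k : ℕ) : poch (c + k) p = poch c p := by
  induction k with
  | zero => simp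
  | succ k ih =>
    rw [← ih, Nat.cast_succ, ← add_assoc]
    rcases p with _ | m
    · simp only [poch_zero]
    · rw [poch_succ_right, poch_succ_left (c + k)]
      linear_combination (poch (c + k + 1) m) * natCast_add_one_eq_zero_of_charP F m

end Pochhammer

section FinCast

variable {F : Type*} [AddGroupWithOne F] {n : ℕ} [CharP F (n + 1)]

lemma Fin.natCast_val_add_one (j : Fin (n + 1)) : (((j + 1 : Fin (n + 1)) : ℕ) : F) = j + 1 := by
  rw [Fin.val_add_one]
  split_ifs with h
  · subst h
    rw [Fin.val_last, Nat.cast_zero, natCast_add_one_eq_zero_of_charP]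
  · push_cast; rfl

lemma Fin.natCast_val_sub_one (i : Fin (n + 1)) : (((i - 1 : Fin (n + 1)) : ℕ) : F) = i - 1 := by
  rw [eq_sub_iff_add_eq, ← Fin.natCast_val_add_one, sub_add_cancel]

end FinCast

section CircularBidiagonal

variable {F : Type*} [Field F] {d : ℕ}

/-- `A(γ) = diag(i + γ) (1 - S)` with `S` the cyclic shift; the corner entry `-γ` is the
wrap-around of the subdiagonal. -/
lemma cbMat_apply (hd : 1 ≤ d) (γ : F) (i k : Fin (d + 1)) :
    cbMat d γ i k = ((i : F) + γ) * ((if i = k then 1 else 0) - if i = k + 1 then 1 else 0) := by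
  have hi := i.isLt
  have hk := k.isLt
  simp only [cbMat, Matrix.of_apply, Fin.ext_iff, Fin.val_add_one, Fin.val_last]
  split_ifs <;> first | omega | (simp_all; try ring)

lemma cbMat_mul_apply (hd : 1 ≤ d) (γ : F) (M : Matrix (Fin (d + 1)) (Fin (d + 1)) F)
    (i j : Fin (d + 1)) : (cbMat d γ * M) i j = ((i : F) + γ) * (M i j - M (i - 1) j) := by
  simp only [Matrix.mul_apply, cbMat_apply hd, ← sub_eq_iff_eq_add, mul_assoc, ← Finset.mul_sum,
    sub_mul, Finset.sum_sub_distrib, ite_mul, one_mul, zero_mul, Finset.sum_ite_eq, Finset.mem_univ,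
    if_true]

lemma mul_cbMat_apply (hd : 1 ≤ d) (γ : F) (M : Matrix (Fin (d + 1)) (Fin (d + 1)) F)
    (i j : Fin (d + 1)) :
    (M * cbMat d γ) i j = M i j * (j + γ) - M i (j + 1) * (((j + 1 : Fin (d + 1)) : ℕ) + γ) := by
  simp only [Matrix.mul_apply, cbMat_apply hd, mul_sub, Finset.sum_sub_distrib, mul_ite, mul_one,
    mul_zero, Finset.sum_ite_eq', Finset.mem_univ, if_true]

theorem cbMat_mul_Pmat [CharP F (d + 1)] (hd : 1 ≤ d) (γ : F) :
    cbMat d γ * Pmat d γ = Pmat d γ * Matrix.diagonal (fun i : Fin (d + 1) => (i.val : F)) := by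
  ext i j
  rw [cbMat_mul_apply hd, Matrix.mul_diagonal]
  simp only [Pmat, Matrix.of_apply, Fin.natCast_val_sub_one]
  rw [show -((i : F) - 1) - γ = -(i : F) - γ + 1 by ring]
  linear_combination mul_poch_add_one_sub_poch (-(i : F) - γ) j / poch (1 - γ) j

theorem diagonal_mul_Pmat [CharP F (d + 1)] (hd : 1 ≤ d) (γ : F)
    (hγ : ∀ i : ℕ, i ≤ d → γ ≠ i) :
    Matrix.diagonal (fun i : Fin (d + 1) => (i.val : F)) * Pmat d γ = Pmat d γ * cbMat d (-γ) := by
  ext i j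
  rw [Matrix.diagonal_mul, mul_cbMat_apply hd]
  simp only [Pmat, Matrix.of_apply]
  have hq : poch (1 - γ) j ≠ 0 := poch_ne_zero_of_forall _ _ fun ℓ hℓ h =>
    hγ (ℓ + 1) (by omega) (by push_cast; linear_combination -h)
  by_cases hj : j = Fin.last d
  · subst hj
    have hshift := poch_add_natCast (d + 1) (-(i : F) - γ - 1) (i + 1)
    rw [show -(i : F) - γ - 1 + ((i + 1 : ℕ) : F) = -γ by push_cast; ring, poch_succ_left,
      poch_succ_left, sub_add_cancel, neg_add_eq_sub] at hshift
    rw [Fin.val_last] at hq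
    rw [Fin.last_add_one, Fin.val_last]
    simp only [Fin.val_zero, poch_zero, Nat.cast_zero, div_one]
    rw [eq_neg_of_add_eq_zero_left (natCast_add_one_eq_zero_of_charP F d)]
    field_simp
    linear_combination hshift
  · have hj' : (j : ℕ) < d := Fin.val_lt_last hj
    have hq' : 1 - γ + j ≠ 0 := fun h => hγ (j + 1) hj' (by push_cast; linear_combination -h)
    rw [Fin.val_add_one_of_lt (Fin.lt_last_iff_ne_last.mpr hj), Nat.cast_succ, poch_succ_right,
      poch_succ_right]
    field_simp
    ring

end CircularBidiagonal

theorem stmt7_general {F : Type*} [Field F] (d : ℕ) (hd : 1 ≤ d)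
    (hchar : CharP F (d + 1)) (γ : F)
    (hγ : ∀ i : ℕ, i ≤ d → γ ≠ (i : F)) :
    cbMat d γ * Pmat d γ =
        Pmat d γ * Matrix.diagonal (fun i : Fin (d + 1) => (i.val : F)) ∧
      Matrix.diagonal (fun i : Fin (d + 1) => (i.val : F)) * Pmat d γ =
        Pmat d γ * cbMat d (-γ) :=
  ⟨cbMat_mul_Pmat hd γ, diagonal_mul_Pmat hd γ hγ⟩

theorem stmt7 {F : Type*} [Field F] (d : ℕ) (hd : 1 ≤ d)
    (hprime : Nat.Prime (d + 1)) (hchar : CharP F (d + 1)) (γ : F)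
    (hγ : ∀ i : ℕ, i ≤ d → γ ≠ (i : F)) :
    cbMat d γ * Pmat d γ =
        Pmat d γ * Matrix.diagonal (fun i : Fin (d + 1) => (i.val : F)) ∧
      Matrix.diagonal (fun i : Fin (d + 1) => (i.val : F)) * Pmat d γ =
        Pmat d γ * cbMat d (-γ) :=
  stmt7_general d hd hchar γ hγ
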